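/- Let F : C → Vect_k^f be a k-linear functor with all F(X) finite-dimensional, and define F ⊗ F : C × C → Vect_k^f by (F ⊗ F)(X,Y) = F(X) ⊗ F(Y) on objects and (F ⊗ F)(f,g) = F(f) ⊗ F(g) on morphisms. Then Coend(F ⊗ F) ≅ Coend(F) ⊗ Coend(F) as coalgebras, where Coend(F) ⊗ Coend(F) carries the tensor product coalgebra structure. Explicitly, if {i_X} is a realization of Coend(F), then the maps i_{X,Y} : Hom_k(F(X) ⊗ F(Y), F(X) ⊗ F(Y)) → Coend(F) ⊗ Coend(F) determined by i_{X,Y}(S ⊗ T) = i_X(S) ⊗ i_Y(T) make Coend(F) ⊗ Coend(F) a realization of Coend(F ⊗ F), and each i_{X,Y} is a coalgebra map. -/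

import Mathlib

/- STATEMENT 11: Coend(F ⊗ F) ≅ Coend(F) ⊗ Coend(F) as coalgebras: if {i_X}
is a realization of Coend(F), then the maps
i_{X,Y} : End_k(F X ⊗ F Y) → Coend(F) ⊗ Coend(F) determined by
i_{X,Y}(S ⊗ T) = i_X(S) ⊗ i_Y(T) make Coend(F) ⊗ Coend(F) a realization of
the coend of the bifunctor F ⊗ F, and each i_{X,Y} is a coalgebra map from the
comatrix coalgebra End_k(F X ⊗ F Y) to the tensor product coalgebra. -/

open CategoryTheory TensorProduct

noncomputable section
universe w₁ w₂ u
variable (k : Type) [Field k]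

def smulRightL {M : Type} [AddCommGroup M] [Module k M] (x : M) :
    (M →ₗ[k] k) →ₗ[k] (M →ₗ[k] M) where
  toFun f := f.smulRight x
  map_add' f g := by ext y; simp [add_smul]
  map_smul' c f := by ext y; simp [smul_smul]

/-- The comatrix comultiplication on `Hom_k(M,M)` for finite-dimensional `M`:
`Δ(β ⊗ x) = Σ_i (β ⊗ x_i) ⊗ (x^i ⊗ x)`.  The corresponding counit is the
trace. -/
def comatrixComul (M : Type) [AddCommGroup M] [Module k M] [Module.Finite k M] :
    (M →ₗ[k] M) →ₗ[k] ((M →ₗ[k] M) ⊗[k] (M →ₗ[k] M)) :=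
  let b := Module.Free.chooseBasis k M
  ∑ i, ∑ l,
    ((TensorProduct.mk k (M →ₗ[k] M) (M →ₗ[k] M)).flip ((b.coord l).smulRight (b i))) ∘ₗ
      (smulRightL k (b l)) ∘ₗ (LinearMap.llcomp k M M k (b.coord i))

variable (C : Type u) [SmallCategory C] [Preadditive C] [CategoryTheory.Linear k C] [Abelian C]
variable (F : C ⥤ ModuleCat k) [F.Additive] [F.Linear k]

/-- Dinaturality of a family of maps `Hom_k(F X, F X) → U`. -/
def DinatC (U : Type w₁) [AddCommGroup U] [Module k U]
    (i : ∀ X : C, (F.obj X →ₗ[k] F.obj X) →ₗ[k] U) : Prop :=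
  ∀ (X Y : C) (f : Y ⟶ X) (S : F.obj X →ₗ[k] F.obj Y),
    i X (((F.map f).hom : F.obj Y →ₗ[k] F.obj X) ∘ₗ S)
      = i Y (S ∘ₗ ((F.map f).hom : F.obj Y →ₗ[k] F.obj X))

/-- `(U, i)` is a realization of `Coend(F)`: a dinatural family which is
initial among all such. -/
def IsCoendRealization (U : Type w₁) [AddCommGroup U] [Module k U]
    (i : ∀ X : C, (F.obj X →ₗ[k] F.obj X) →ₗ[k] U) : Prop :=
  DinatC k C F U i ∧
  ∀ (V : Type w₂) [AddCommGroup V] [Module k V]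
    (j : ∀ X : C, (F.obj X →ₗ[k] F.obj X) →ₗ[k] V), DinatC k C F V j →
    ∃! φ : U →ₗ[k] V, ∀ X : C, φ ∘ₗ i X = j X

/-- Dinaturality for a family over pairs of objects, i.e. for the bifunctor
`F ⊗ F : C × C → Vect_k`. -/
def DinatC2 (U : Type w₁) [AddCommGroup U] [Module k U]
    (i2 : ∀ X Y : C,
      ((F.obj X ⊗[k] F.obj Y) →ₗ[k] (F.obj X ⊗[k] F.obj Y)) →ₗ[k] U) : Prop :=
  ∀ (X X' Y Y' : C) (f : X' ⟶ X) (g : Y' ⟶ Y)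
    (T : (F.obj X ⊗[k] F.obj Y) →ₗ[k] (F.obj X' ⊗[k] F.obj Y')),
    i2 X Y ((TensorProduct.map ((F.map f).hom : F.obj X' →ₗ[k] F.obj X)
        ((F.map g).hom : F.obj Y' →ₗ[k] F.obj Y)) ∘ₗ T)
      = i2 X' Y' (T ∘ₗ (TensorProduct.map ((F.map f).hom : F.obj X' →ₗ[k] F.obj X)
        ((F.map g).hom : F.obj Y' →ₗ[k] F.obj Y)))

/-- `(U, i2)` is a realization of the coend of the bifunctor `F ⊗ F`. -/
def IsCoend2Realization (U : Type w₁) [AddCommGroup U] [Module k U]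
    (i2 : ∀ X Y : C,
      ((F.obj X ⊗[k] F.obj Y) →ₗ[k] (F.obj X ⊗[k] F.obj Y)) →ₗ[k] U) : Prop :=
  DinatC2 k C F U i2 ∧
  ∀ (V : Type w₂) [AddCommGroup V] [Module k V]
    (j2 : ∀ X Y : C,
      ((F.obj X ⊗[k] F.obj Y) →ₗ[k] (F.obj X ⊗[k] F.obj Y)) →ₗ[k] V),
    DinatC2 k C F V j2 →
    ∃! φ : U →ₗ[k] V, ∀ X Y : C, φ ∘ₗ i2 X Y = j2 X Y

/-- The maps `i_{X,Y} : End_k(F X ⊗ F Y) → U ⊗ U`, `S ⊗ T ↦ i_X(S) ⊗ i_Y(T)`,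
using `End_k(F X ⊗ F Y) ≅ End_k(F X) ⊗ End_k(F Y)`. -/
def iTensor (hfd : ∀ X : C, FiniteDimensional k (F.obj X))
    (U : Type) [AddCommGroup U] [Module k U]
    (i : ∀ X : C, (F.obj X →ₗ[k] F.obj X) →ₗ[k] U) (X Y : C) :
    ((F.obj X ⊗[k] F.obj Y) →ₗ[k] (F.obj X ⊗[k] F.obj Y)) →ₗ[k] U ⊗[k] U :=
  haveI := hfd X; haveI := hfd Y
  (TensorProduct.map (i X) (i Y)) ∘ₗ
    (homTensorHomEquiv k (F.obj X) (F.obj Y) (F.obj X) (F.obj Y)).symm.toLinearMap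

/-! Under `End M ⊗ End M ≅ End (M ⊗ M)` the comatrix comultiplication sends `S` to
`x ⊗ y ↦ y ⊗ S x`. This basis-free description is visibly compatible with
`End (M ⊗ N) ≅ End M ⊗ End N`, which makes each `i_{X,Y}` a coalgebra map.
The universal property is Fubini for coends: a family `j_{X,Y}` dinatural in each variable
factors through `Coend(F)` in `X` for each fixed `Y`, and the resulting family of maps
`U → Hom(End F(Y), V)` factors through `Coend(F)` in `Y`, giving a bilinear map on `U × U`. -/

section ComatrixComul

variable {k}

theorem homTensorHom_ext {M N P Q W : Type*} [AddCommGroup M] [Module k M] [Module.Finite k M]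
    [AddCommGroup N] [Module k N] [Module.Finite k N] [AddCommGroup P] [Module k P]
    [AddCommGroup Q] [Module k Q] [AddCommGroup W] [Module k W]
    {φ₁ φ₂ : (M ⊗[k] N →ₗ[k] P ⊗[k] Q) →ₗ[k] W}
    (h : ∀ (S : M →ₗ[k] P) (T : N →ₗ[k] Q), φ₁ (map S T) = φ₂ (map S T)) : φ₁ = φ₂ := by
  rw [← LinearMap.cancel_right (homTensorHomEquiv k M N P Q).surjective]
  exact TensorProduct.ext' fun S T => by simpa using h S T

variable {M N : Type} [AddCommGroup M] [Module k M] [AddCommGroup N] [Module k N]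

theorem homTensorHomMap_comp_map_homTensorHomMap :
    homTensorHomMap (.id k) (M ⊗[k] N) (M ⊗[k] N) (M ⊗[k] N) (M ⊗[k] N) ∘ₗ
        map (homTensorHomMap (.id k) M N M N) (homTensorHomMap (.id k) M N M N) ∘ₗ
          (tensorTensorTensorComm k (M →ₗ[k] M) (M →ₗ[k] M) (N →ₗ[k] N) (N →ₗ[k] N)).toLinearMap
      = (LinearEquiv.conj (tensorTensorTensorComm k M M N N)).toLinearMap ∘ₗ
          homTensorHomMap (.id k) (M ⊗[k] M) (N ⊗[k] N) (M ⊗[k] M) (N ⊗[k] N) ∘ₗ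
            map (homTensorHomMap (.id k) M M M M) (homTensorHomMap (.id k) N N N N) := by
  refine TensorProduct.ext_fourfold' fun S S' T T' => ?_
  refine TensorProduct.ext_fourfold' fun x y x' y' => ?_
  simp [LinearEquiv.conj_apply, tensorTensorTensorComm_symm]

variable [Module.Finite k M] [Module.Finite k N]

theorem homTensorHomMap_comatrixComul (S : M →ₗ[k] M) :
    homTensorHomMap (.id k) M M M M (comatrixComul k M S)
      = (TensorProduct.comm k M M).toLinearMap ∘ₗ map S LinearMap.id := by
  set b := Module.Free.chooseBasis k M
  refine TensorProduct.ext' fun x y => ?_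
  simp only [comatrixComul, smulRightL, LinearMap.sum_apply, map_sum, LinearMap.comp_apply,
    LinearMap.coe_mk, AddHom.coe_mk, LinearMap.flip_apply, mk_apply, LinearMap.llcomp_apply,
    homTensorHomMap_apply, map_tmul, LinearMap.smulRight_apply, LinearEquiv.coe_coe, comm_tmul,
    LinearMap.id_apply]
  conv_rhs => rw [← b.sum_repr y, ← b.sum_repr (S x)]
  simp only [sum_tmul, tmul_sum, smul_tmul_smul, Module.Basis.coord_apply, mul_comm]
  rw [Finset.sum_comm]

theorem comatrixComul_comp_homTensorHomMap :
    comatrixComul k (M ⊗[k] N) ∘ₗ homTensorHomMap (.id k) M N M N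
      = map (homTensorHomMap (.id k) M N M N) (homTensorHomMap (.id k) M N M N) ∘ₗ
          (tensorTensorTensorComm k _ _ _ _).toLinearMap ∘ₗ
            map (comatrixComul k M) (comatrixComul k N) := by
  rw [← LinearMap.cancel_left
    (homTensorHomEquiv k (M ⊗[k] N) (M ⊗[k] N) (M ⊗[k] N) (M ⊗[k] N)).injective]
  rw [homTensorHomEquiv_toLinearMap,
    ← LinearMap.comp_assoc (map (comatrixComul k M) (comatrixComul k N)),
    ← LinearMap.comp_assoc (map (comatrixComul k M) (comatrixComul k N)),
    homTensorHomMap_comp_map_homTensorHomMap]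
  refine TensorProduct.ext' fun S T => ?_
  refine TensorProduct.ext_fourfold' fun x y x' y' => ?_
  simp [homTensorHomMap_comatrixComul, LinearEquiv.conj_apply, tensorTensorTensorComm_symm]

end ComatrixComul

section Coend

variable {k} {J : Type*} [SmallCategory J] {G : J ⥤ ModuleCat.{0} k}
  {U : Type} [AddCommGroup U] [Module k U] {i : ∀ X : J, (G.obj X →ₗ[k] G.obj X) →ₗ[k] U}

theorem DinatC.postcomp (hi : DinatC k J G U i) {W : Type*} [AddCommGroup W] [Module k W]
    (φ : U →ₗ[k] W) : DinatC k J G W (fun X => φ ∘ₗ i X) :=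
  fun X Y f S => congrArg φ (hi X Y f S)

namespace IsCoendRealization

theorem hom_ext (hreal : IsCoendRealization.{0, 0} k J G U i) {W : Type} [AddCommGroup W]
    [Module k W] {φ₁ φ₂ : U →ₗ[k] W} (h : ∀ X, φ₁ ∘ₗ i X = φ₂ ∘ₗ i X) : φ₁ = φ₂ := by
  obtain ⟨_, -, huniq⟩ := hreal.2 W _ (hreal.1.postcomp φ₂)
  exact (huniq φ₁ h).trans (huniq φ₂ fun _ => rfl).symm

theorem tensor_hom_ext (hreal : IsCoendRealization.{0, 0} k J G U i) {W : Type}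
    [AddCommGroup W] [Module k W] {φ₁ φ₂ : U ⊗[k] U →ₗ[k] W}
    (h : ∀ X Y S T, φ₁ (i X S ⊗ₜ i Y T) = φ₂ (i X S ⊗ₜ i Y T)) : φ₁ = φ₂ :=
  TensorProduct.ext <| hreal.hom_ext fun X => LinearMap.ext fun S =>
    hreal.hom_ext fun Y => LinearMap.ext fun T => h X Y S T

theorem exists_tensor_lift (hreal : IsCoendRealization.{0, 0} k J G U i) {V : Type}
    [AddCommGroup V] [Module k V]
    (j : ∀ X Y : J, (G.obj X →ₗ[k] G.obj X) →ₗ[k] (G.obj Y →ₗ[k] G.obj Y) →ₗ[k] V)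
    (hj₁ : ∀ Y, DinatC k J G ((G.obj Y →ₗ[k] G.obj Y) →ₗ[k] V) fun X => j X Y)
    (hj₂ : ∀ X S, DinatC k J G V fun Y => j X Y S) :
    ∃ φ : U ⊗[k] U →ₗ[k] V, ∀ X Y S T, φ (i X S ⊗ₜ i Y T) = j X Y S T := by
  choose ψ hψ using fun Y => (hreal.2 _ _ (hj₁ Y)).exists
  have hψ_apply : ∀ X Y S, ψ Y (i X S) = j X Y S := fun X Y S => LinearMap.congr_fun (hψ Y X) S
  have hψ_dinat : DinatC k J G (U →ₗ[k] V) fun Y => (ψ Y).flip := by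
    intro Y Y' g T
    refine hreal.hom_ext fun X => LinearMap.ext fun S => ?_
    simpa [hψ_apply] using hj₂ X S Y Y' g T
  obtain ⟨χ, hχ⟩ := (hreal.2 _ _ hψ_dinat).exists
  have hχ_apply : ∀ Y T u, χ (i Y T) u = ψ Y u T := fun Y T u =>
    LinearMap.congr_fun (LinearMap.congr_fun (hχ Y) T) u
  refine ⟨lift χ.flip, fun X Y S T => ?_⟩
  rw [lift.tmul, LinearMap.flip_apply, hχ_apply, hψ_apply]

end IsCoendRealization

end Coend

section TensorSquare

variable {k} {J : Type*} [SmallCategory J] {G : J ⥤ ModuleCat.{0} k}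
  (hfd : ∀ X : J, FiniteDimensional k (G.obj X))
  {U : Type} [AddCommGroup U] [Module k U] {i : ∀ X : J, (G.obj X →ₗ[k] G.obj X) →ₗ[k] U}

theorem iTensor_comp_homTensorHomMap (X Y : J) :
    haveI := hfd X; haveI := hfd Y
    iTensor k J G hfd U i X Y ∘ₗ homTensorHomMap (.id k) (G.obj X) (G.obj Y) (G.obj X) (G.obj Y)
      = map (i X) (i Y) := by
  have := hfd X; have := hfd Y
  rw [iTensor, ← homTensorHomEquiv_toLinearMap, LinearMap.comp_assoc, LinearEquiv.symm_comp,
    LinearMap.comp_id]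

theorem iTensor_map (X Y : J) (S : G.obj X →ₗ[k] G.obj X) (T : G.obj Y →ₗ[k] G.obj Y) :
    iTensor k J G hfd U i X Y (map S T) = i X S ⊗ₜ i Y T :=
  LinearMap.congr_fun (iTensor_comp_homTensorHomMap hfd X Y) (S ⊗ₜ T)

theorem dinatC2_iTensor (hi : DinatC k J G U i) :
    DinatC2 k J G (U ⊗[k] U) (iTensor k J G hfd U i) := by
  intro X X' Y Y' f g T
  have := hfd X; have := hfd Y
  let fg := map (G.map f).hom (G.map g).hom
  refine LinearMap.congr_fun (homTensorHom_ext
    (φ₁ := iTensor k J G hfd U i X Y ∘ₗ LinearMap.llcomp k _ _ _ fg)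
    (φ₂ := iTensor k J G hfd U i X' Y' ∘ₗ LinearMap.lcomp k (G.obj X' ⊗[k] G.obj Y') fg)
    fun S T => ?_) T
  simp only [fg, LinearMap.comp_apply, LinearMap.llcomp_apply', LinearMap.lcomp_apply',
    ← map_comp, iTensor_map, hi X X' f S, hi Y Y' g T]

theorem DinatC2.dinatC_fst {V : Type} [AddCommGroup V] [Module k V]
    {j2 : ∀ X Y : J, ((G.obj X ⊗[k] G.obj Y) →ₗ[k] (G.obj X ⊗[k] G.obj Y)) →ₗ[k] V}
    (h : DinatC2 k J G V j2) (Y : J) :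
    DinatC k J G ((G.obj Y →ₗ[k] G.obj Y) →ₗ[k] V)
      fun X => (mapBilinear (.id k) (G.obj X) (G.obj Y) (G.obj X) (G.obj Y)).compr₂ (j2 X Y) := by
  intro X X' f S
  ext T
  simpa [← map_comp] using h X X' Y Y f (𝟙 Y) (map S T)

theorem DinatC2.dinatC_snd {V : Type} [AddCommGroup V] [Module k V]
    {j2 : ∀ X Y : J, ((G.obj X ⊗[k] G.obj Y) →ₗ[k] (G.obj X ⊗[k] G.obj Y)) →ₗ[k] V}
    (h : DinatC2 k J G V j2) (X : J) (S : G.obj X →ₗ[k] G.obj X) :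
    DinatC k J G V
      fun Y => (mapBilinear (.id k) (G.obj X) (G.obj Y) (G.obj X) (G.obj Y)).compr₂ (j2 X Y) S := by
  intro Y Y' g T
  simpa [← map_comp] using h X X Y Y' (𝟙 X) g (map S T)

theorem IsCoendRealization.isCoend2Realization_iTensor
    (hreal : IsCoendRealization.{0, 0} k J G U i) :
    IsCoend2Realization.{0, 0} k J G (U ⊗[k] U) (iTensor k J G hfd U i) := by
  refine ⟨dinatC2_iTensor hfd hreal.1, fun V _ _ j2 hj2 => ?_⟩
  obtain ⟨φ, hφ⟩ := hreal.exists_tensor_lift _ (DinatC2.dinatC_fst hj2) (DinatC2.dinatC_snd hj2)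
  refine ⟨φ, fun X Y => ?_, fun φ' hφ' => hreal.tensor_hom_ext fun X Y S T => ?_⟩
  · have := hfd X; have := hfd Y
    exact homTensorHom_ext fun S T => by simp [iTensor_map, hφ]
  · rw [hφ, ← iTensor_map hfd, ← LinearMap.comp_apply, hφ']
    rfl

theorem iTensor_comul (Δ : U →ₗ[k] U ⊗[k] U)
    (hΔ : ∀ X : J, haveI := hfd X;
      Δ ∘ₗ i X = (TensorProduct.map (i X) (i X)) ∘ₗ comatrixComul k (G.obj X)) (X Y : J) :
    haveI := hfd X; haveI := hfd Y
    ((tensorTensorTensorComm k U U U U).toLinearMap ∘ₗ map Δ Δ) ∘ₗ iTensor k J G hfd U i X Y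
      = map (iTensor k J G hfd U i X Y) (iTensor k J G hfd U i X Y) ∘ₗ
          comatrixComul k (G.obj X ⊗[k] G.obj Y) := by
  have := hfd X; have := hfd Y
  rw [← LinearMap.cancel_right
    (homTensorHomEquiv k (G.obj X) (G.obj Y) (G.obj X) (G.obj Y)).surjective,
    homTensorHomEquiv_toLinearMap]
  calc _ = (tensorTensorTensorComm k U U U U).toLinearMap ∘ₗ map (Δ ∘ₗ i X) (Δ ∘ₗ i Y) := by
        rw [LinearMap.comp_assoc, iTensor_comp_homTensorHomMap, LinearMap.comp_assoc, ← map_comp]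
    _ = (tensorTensorTensorComm k U U U U).toLinearMap ∘ₗ map (map (i X) (i X)) (map (i Y) (i Y))
          ∘ₗ map (comatrixComul k (G.obj X)) (comatrixComul k (G.obj Y)) := by
        rw [hΔ, hΔ, map_comp]
    _ = map (map (i X) (i Y)) (map (i X) (i Y)) ∘ₗ (tensorTensorTensorComm k _ _ _ _).toLinearMap
          ∘ₗ map (comatrixComul k (G.obj X)) (comatrixComul k (G.obj Y)) := by
        rw [← LinearMap.comp_assoc, tensorTensorTensorComm_comp_map, LinearMap.comp_assoc]
    _ = _ := by
        conv_rhs => rw [LinearMap.comp_assoc, comatrixComul_comp_homTensorHomMap,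
          ← LinearMap.comp_assoc _ _ (map _ _), ← map_comp, iTensor_comp_homTensorHomMap]

theorem iTensor_counit (ε : U →ₗ[k] k) (hε : ∀ X : J, ε ∘ₗ i X = LinearMap.trace k (G.obj X))
    (X Y : J) :
    haveI := hfd X; haveI := hfd Y
    ((TensorProduct.lid k k).toLinearMap ∘ₗ map ε ε) ∘ₗ iTensor k J G hfd U i X Y
      = LinearMap.trace k (G.obj X ⊗[k] G.obj Y) := by
  have := hfd X; have := hfd Y
  refine homTensorHom_ext fun S T => ?_
  rw [LinearMap.trace_tensorProduct', ← hε, ← hε]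
  simp [iTensor_map]

end TensorSquare

theorem coend_of_tensor_square
    (hfd : ∀ X : C, FiniteDimensional k (F.obj X))
    (U : Type) [AddCommGroup U] [Module k U]
    (i : ∀ X : C, (F.obj X →ₗ[k] F.obj X) →ₗ[k] U)
    (hreal : IsCoendRealization.{0, 0} k C F U i)
    (Δ : U →ₗ[k] U ⊗[k] U) (ε : U →ₗ[k] k)
    (hΔ : ∀ X : C, haveI := hfd X;
      Δ ∘ₗ i X = (TensorProduct.map (i X) (i X)) ∘ₗ comatrixComul k (F.obj X))
    (hε : ∀ X : C, ε ∘ₗ i X = LinearMap.trace k (F.obj X)) :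
    -- on pure tensors, i_{X,Y}(S ⊗ T) = i_X(S) ⊗ i_Y(T):
    (∀ (X Y : C) (S : F.obj X →ₗ[k] F.obj X) (T : F.obj Y →ₗ[k] F.obj Y),
      haveI := hfd X; haveI := hfd Y
      iTensor k C F hfd U i X Y (TensorProduct.map S T) = i X S ⊗ₜ[k] i Y T) ∧
    -- U ⊗ U with the maps i_{X,Y} is a realization of Coend(F ⊗ F):
    IsCoend2Realization.{0, 0} k C F (U ⊗[k] U) (iTensor k C F hfd U i) ∧
    -- and each i_{X,Y} is a coalgebra map to the tensor product coalgebra: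
    (∀ X Y : C,
      haveI := hfd X; haveI := hfd Y
      ((tensorTensorTensorComm k U U U U).toLinearMap ∘ₗ (TensorProduct.map Δ Δ)) ∘ₗ
          iTensor k C F hfd U i X Y
        = (TensorProduct.map (iTensor k C F hfd U i X Y) (iTensor k C F hfd U i X Y)) ∘ₗ
            comatrixComul k (F.obj X ⊗[k] F.obj Y) ∧
      ((TensorProduct.lid k k).toLinearMap ∘ₗ (TensorProduct.map ε ε)) ∘ₗ
          iTensor k C F hfd U i X Y
        = LinearMap.trace k (F.obj X ⊗[k] F.obj Y)) := by
  exact ⟨iTensor_map hfd, hreal.isCoend2Realization_iTensor hfd,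
    fun X Y => ⟨iTensor_comul hfd Δ hΔ X Y, iTensor_counit hfd ε hε X Y⟩⟩
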